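/- arXiv:2003.10710 — 4 statements merged into one kernel-verified Lean document; each statement's English description precedes it below -/
import Mathlib

section
/- Let $\nu > 0$, $\eta \geq 0$ an integer, and let $A_\nu$ be the $(\eta+1)\times(\eta+1)$ matrix with diagonal $-\nu$, superdiagonal $1$, zeros elsewhere. For any $x \in \mathbb{R}^{\eta+1}$ and all $t \geq 0$, the first coordinate of $e^{A_\nu t}x$ satisfies $(e^{A_\nu t}x)_1 \leq \max_{j=1,\dots,\eta+1}\max\{0, x_j / \nu^{j-1}\}$. -/
/-!
Write `A = -ν • 1 + N` with `N` the nilpotent upper shift. The two parts commute, so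
`exp (t • A) = e^{-νt} ∑_{k ≤ η} (t^k / k!) • N^k`, whose first row is `e^{-νt} t^j / j!`.
With `M` the right-hand side, `x j ≤ M ν^j` and `M ≥ 0`, hence the first coordinate is at most
`e^{-νt} M ∑_j (νt)^j / j! ≤ e^{-νt} M e^{νt} = M`.
-/

open Real Matrix Finset
open scoped Nat

theorem NormedSpace.exp_eq_sum_of_pow_eq_zero {𝔸 : Type*} [Ring 𝔸] [Algebra ℚ 𝔸]
    [TopologicalSpace 𝔸] [IsTopologicalRing 𝔸] [T2Space 𝔸] {a : 𝔸} {k : ℕ} (h : a ^ k = 0) :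
    NormedSpace.exp a = ∑ i ∈ range k, (i ! : ℚ)⁻¹ • a ^ i := by
  rw [NormedSpace.exp_eq_tsum_rat]
  exact tsum_eq_sum fun i hi => by
    rw [pow_eq_zero_of_le (by simpa using hi) h, smul_zero]

namespace Matrix

def upperShift (n : ℕ) (R : Type*) [Zero R] [One R] : Matrix (Fin n) (Fin n) R :=
  of fun i j => if (j : ℕ) = i + 1 then 1 else 0

variable {n : ℕ} {R : Type*} [Semiring R]

theorem upperShift_pow_apply (k : ℕ) (i j : Fin n) :
    (upperShift n R ^ k) i j = if (j : ℕ) = i + k then 1 else 0 := by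
  induction k generalizing i with
  | zero => simp [one_apply, Fin.ext_iff, eq_comm]
  | succ k ih =>
    rw [pow_succ', mul_apply]
    by_cases hi : (i : ℕ) + 1 < n
    · rw [sum_eq_single ⟨i + 1, hi⟩ ?_ (by simp), ih, upperShift, of_apply, if_pos rfl, one_mul,
        add_assoc, add_comm 1 k]
      intro b _ hb
      rw [upperShift, of_apply, if_neg fun h => hb (Fin.ext h), zero_mul]
    · have hj : (j : ℕ) ≠ i + (k + 1) := by omega
      simp only [upperShift, of_apply, hj, if_false]
      exact sum_eq_zero fun b _ => by rw [if_neg (by omega), zero_mul]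

theorem upperShift_pow_eq_zero {k : ℕ} (hk : n ≤ k) : upperShift n R ^ k = 0 := by
  ext i j
  rw [upperShift_pow_apply, if_neg (by omega), zero_apply]

theorem exp_smul_one_add {m : Type*} [Fintype m] [DecidableEq m] (c : ℝ) (B : Matrix m m ℝ) :
    NormedSpace.exp (c • 1 + B) = Real.exp c • NormedSpace.exp B := by
  rw [exp_add_of_commute _ _ ((Commute.one_left B).smul_left c), smul_one_eq_diagonal,
    exp_diagonal, Pi.exp_def, ← Real.exp_eq_exp_ℝ, ← smul_one_eq_diagonal, smul_one_mul]

theorem exp_smul_upperShift_apply_zero (t : ℝ) (j : Fin (n + 1)) :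
    NormedSpace.exp (t • upperShift (n + 1) ℝ) 0 j = t ^ (j : ℕ) / (j : ℕ)! := by
  rw [NormedSpace.exp_eq_sum_of_pow_eq_zero (k := n + 1)
    (by rw [smul_pow, upperShift_pow_eq_zero le_rfl, smul_zero])]
  simp only [sum_apply, smul_apply, smul_pow, upperShift_pow_apply, Fin.val_zero, zero_add,
    smul_ite, smul_zero, sum_ite_eq, mem_range, j.isLt, if_true]
  rw [Rat.smul_def, smul_eq_mul, mul_one, Rat.cast_inv, Rat.cast_natCast, inv_mul_eq_div]

theorem exp_smul_one_add_smul_upperShift_mulVec_apply_zero (c t : ℝ) (x : Fin (n + 1) → ℝ) :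
    (NormedSpace.exp (c • 1 + t • upperShift (n + 1) ℝ) *ᵥ x) 0 =
      Real.exp c * ∑ j : Fin (n + 1), t ^ (j : ℕ) / (j : ℕ)! * x j := by
  rw [exp_smul_one_add, Matrix.smul_mulVec, Pi.smul_apply, smul_eq_mul]
  simp only [mulVec, dotProduct, exp_smul_upperShift_apply_zero]

end Matrix

theorem sum_pow_div_factorial_mul_le_mul_exp {n : ℕ} {t ν M : ℝ} {x : Fin n → ℝ} (ht : 0 ≤ t)
    (hν : 0 ≤ ν) (hM : 0 ≤ M) (hx : ∀ j, x j ≤ M * ν ^ (j : ℕ)) :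
    ∑ j : Fin n, t ^ (j : ℕ) / (j : ℕ)! * x j ≤ M * Real.exp (ν * t) :=
  calc ∑ j : Fin n, t ^ (j : ℕ) / (j : ℕ)! * x j
      ≤ ∑ j : Fin n, t ^ (j : ℕ) / (j : ℕ)! * (M * ν ^ (j : ℕ)) := by gcongr with j; exact hx j
    _ = M * ∑ k ∈ range n, (ν * t) ^ k / k ! := by
      rw [mul_sum, ← Fin.sum_univ_eq_sum_range]
      exact sum_congr rfl fun j _ => by ring
    _ ≤ M * Real.exp (ν * t) := by gcongr; exact Real.sum_le_exp_of_nonneg (by positivity) n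

theorem flow_first_coordinate_bound (ν : ℝ) (hν : 0 < ν) (η : ℕ)
    (A : Matrix (Fin (η + 1)) (Fin (η + 1)) ℝ)
    (hA : ∀ i j : Fin (η + 1), A i j =
      if (j : ℕ) = (i : ℕ) then -ν else if (j : ℕ) = (i : ℕ) + 1 then 1 else 0)
    (x : Fin (η + 1) → ℝ) (t : ℝ) (ht : 0 ≤ t) :
    (NormedSpace.exp (t • A)).mulVec x 0 ≤
      Finset.univ.sup' Finset.univ_nonempty (fun j : Fin (η + 1) => max 0 (x j / ν ^ (j : ℕ))) := by
  set M := univ.sup' univ_nonempty fun j : Fin (η + 1) => max 0 (x j / ν ^ (j : ℕ))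
  have hM (j : Fin (η + 1)) : max 0 (x j / ν ^ (j : ℕ)) ≤ M :=
    le_sup' (fun j : Fin (η + 1) => max 0 (x j / ν ^ (j : ℕ))) (mem_univ j)
  have hx (j : Fin (η + 1)) : x j ≤ M * ν ^ (j : ℕ) :=
    (div_le_iff₀ (pow_pos hν _)).1 ((le_max_right _ _).trans (hM j))
  have hA' : A = (-ν) • 1 + upperShift (η + 1) ℝ := by
    ext i j
    rw [hA, Matrix.add_apply, Matrix.smul_apply, one_apply, upperShift, of_apply]
    by_cases hij : i = j
    · simp [hij]
    · have : (j : ℕ) ≠ i := fun h => hij (Fin.ext h.symm)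
      simp [hij, this]
  have htA : t • A = (-(ν * t)) • 1 + t • upperShift (η + 1) ℝ := by
    rw [hA', smul_add, smul_smul, mul_neg, mul_comm]
  rw [htA, exp_smul_one_add_smul_upperShift_mulVec_apply_zero]
  calc Real.exp (-(ν * t)) * ∑ j : Fin (η + 1), t ^ (j : ℕ) / (j : ℕ)! * x j
      ≤ Real.exp (-(ν * t)) * (M * Real.exp (ν * t)) := by
        gcongr
        exact sum_pow_div_factorial_mul_le_mul_exp ht hν.le ((le_max_left _ _).trans (hM 0)) hx
    _ = M := by rw [mul_left_comm, ← Real.exp_add, neg_add_cancel, Real.exp_zero, mul_one]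
end

section
/- Let $\nu > 0$, $\Delta > 0$, $\eta \geq 0$ an integer, and let $b \in \mathbb{R}^{\eta+1}$ be the vector with entries $b_i = \frac{\Delta^{\eta+1-i}}{(\eta+1-i)!}$ for $i = 1,\dots,\eta+1$. Let $M$ be the $(\eta+1)\times(\eta+1)$ upper-triangular matrix with $M_{i,j} = e^{-\nu\Delta}\Delta^{j-i}/(j-i)!$ for $j \geq i$. Then the vectors $b, Mb, M^2 b, \dots, M^{\eta} b$ are linearly independent in $\mathbb{R}^{\eta+1}$. -/
/-!
`M` is `e^{-νΔ}` times the Taylor shift by `Δ`, which by the binomial theorem sends the vector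
of divided powers `t ^ k / k!` to that of `Δ + t`. Hence `M ^ j b` is `e^{-jνΔ}` times the
divided-power vector of `(j + 1) Δ`; up to factorials and the nonzero scalars these are the rows
of a Vandermonde matrix at the distinct nodes `(j + 1) Δ`.
-/

open Real Matrix Finset

section DividedPowers

variable {K : Type*} [Field K] [CharZero K]

theorem add_pow_div_factorial (x y : K) (n : ℕ) :
    (x + y) ^ n / n.factorial
      = ∑ m ∈ range (n + 1), x ^ m / m.factorial * (y ^ (n - m) / (n - m).factorial) := by
  rw [add_pow, sum_div]
  refine sum_congr rfl fun m hm => ?_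
  rw [Nat.cast_choose K (Nat.lt_succ_iff.mp (mem_range.mp hm))]
  have := (n - m).factorial_ne_zero
  have := m.factorial_ne_zero
  have := n.factorial_ne_zero
  field_simp

def dividedPowVec (η : ℕ) (t : K) : Fin (η + 1) → K :=
  fun i => t ^ (η - (i : ℕ)) / (η - (i : ℕ)).factorial

/-- The matrix of the substitution `t ↦ s + t` in the basis of divided powers. -/
def taylorShift (η : ℕ) (s : K) : Matrix (Fin (η + 1)) (Fin (η + 1)) K :=
  of fun i j => if (i : ℕ) ≤ j then s ^ ((j : ℕ) - i) / ((j : ℕ) - i).factorial else 0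

theorem taylorShift_mulVec_dividedPowVec (η : ℕ) (s t : K) :
    taylorShift η s *ᵥ dividedPowVec η t = dividedPowVec η (s + t) := by
  funext i
  let f : ℕ → K := fun m => s ^ m / m.factorial * (t ^ (η - i - m) / (η - i - m).factorial)
  calc (taylorShift η s *ᵥ dividedPowVec η t) i
      = ∑ j ∈ range (η + 1), if (i : ℕ) ≤ j then f (j - i) else 0 := by
        simp only [mulVec, dotProduct]
        rw [← Fin.sum_univ_eq_sum_range]
        refine sum_congr rfl fun j _ => ?_
        simp only [taylorShift, dividedPowVec, f, of_apply]
        split_ifs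
        · rw [Nat.sub_sub, Nat.add_sub_cancel' ‹_›]
        · rw [zero_mul]
    _ = ∑ m ∈ range (η - i + 1), f m := by
        rw [← sum_filter, range_eq_Ico, Ico_filter_le_of_left_le (Nat.zero_le _),
          sum_Ico_eq_sum_range, show η + 1 - i = η - i + 1 by omega]
        simp only [Nat.add_sub_cancel_left]
    _ = dividedPowVec η (s + t) i := (add_pow_div_factorial s t (η - i)).symm

theorem smul_taylorShift_pow_mulVec_dividedPowVec (η : ℕ) (c s t : K) (j : ℕ) :
    (c • taylorShift η s) ^ j *ᵥ dividedPowVec η t =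
      c ^ j • dividedPowVec η (j * s + t) := by
  induction j with
  | zero => simp
  | succ j ih =>
    rw [pow_succ', ← mulVec_mulVec, ih, mulVec_smul, smul_mulVec,
      taylorShift_mulVec_dividedPowVec, smul_smul, pow_succ']
    push_cast
    ring_nf

theorem linearIndependent_dividedPowVec {η : ℕ} {x : Fin (η + 1) → K}
    (hx : Function.Injective x) : LinearIndependent K (fun j => dividedPowVec η (x j)) := by
  refine Fintype.linearIndependent_iff.mpr fun g hg => ?_
  refine congrFun (eq_zero_of_forall_pow_sum_mul_pow_eq_zero hx fun k => ?_)
  have hk := congrFun hg k.rev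
  simp only [Finset.sum_apply, Pi.smul_apply, smul_eq_mul, dividedPowVec, Fin.val_rev,
    Pi.zero_apply, show η - (η + 1 - (k + 1)) = k by omega, mul_div_assoc', ← sum_div,
    div_eq_zero_iff, Nat.cast_eq_zero, k.val.factorial_ne_zero, or_false] at hk
  exact hk

end DividedPowers

theorem kalman_rank_condition_general (ν Δ : ℝ) (hΔ : 0 < Δ) (η : ℕ)
    (b : Fin (η + 1) → ℝ)
    (hb : ∀ i : Fin (η + 1), b i = Δ ^ (η - (i : ℕ)) / (η - (i : ℕ)).factorial)
    (M : Matrix (Fin (η + 1)) (Fin (η + 1)) ℝ)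
    (hM : ∀ i j : Fin (η + 1), M i j =
      if (i : ℕ) ≤ (j : ℕ)
        then Real.exp (-ν * Δ) * Δ ^ ((j : ℕ) - (i : ℕ)) / ((j : ℕ) - (i : ℕ)).factorial
        else 0) :
    LinearIndependent ℝ (fun j : Fin (η + 1) => (M ^ (j : ℕ)).mulVec b) := by
  have hb' : b = dividedPowVec η Δ := funext hb
  have hM' : M = Real.exp (-ν * Δ) • taylorShift η Δ := by
    ext i j
    rw [hM, Matrix.smul_apply, taylorShift, of_apply, smul_eq_mul, mul_ite, mul_zero,
      mul_div_assoc]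
  have hnodes : Function.Injective fun j : Fin (η + 1) => ((j : ℕ) : ℝ) * Δ + Δ := by
    intro j k hjk
    exact Fin.ext (by simpa [hΔ.ne'] using hjk)
  simp_rw [hb', hM', smul_taylorShift_pow_mulVec_dividedPowVec]
  exact (linearIndependent_dividedPowVec hnodes).units_smul
    fun j => Units.mk0 (Real.exp (-ν * Δ) ^ (j : ℕ)) (pow_ne_zero _ (Real.exp_ne_zero _))

theorem kalman_rank_condition (ν Δ : ℝ) (hν : 0 < ν) (hΔ : 0 < Δ) (η : ℕ)
    (b : Fin (η + 1) → ℝ)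
    (hb : ∀ i : Fin (η + 1), b i = Δ ^ (η - (i : ℕ)) / (η - (i : ℕ)).factorial)
    (M : Matrix (Fin (η + 1)) (Fin (η + 1)) ℝ)
    (hM : ∀ i j : Fin (η + 1), M i j =
      if (i : ℕ) ≤ (j : ℕ)
        then Real.exp (-ν * Δ) * Δ ^ ((j : ℕ) - (i : ℕ)) / ((j : ℕ) - (i : ℕ)).factorial
        else 0) :
    LinearIndependent ℝ (fun j : Fin (η + 1) => (M ^ (j : ℕ)).mulVec b) :=
  kalman_rank_condition_general ν Δ hΔ η b hb M hM
end

section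
/- Let $\nu > 0$ and $\eta \geq 0$ an integer. Then $\max\{0, \max_{j=1,\dots,\eta+1}\{x_j/\nu^{j-1}\}\}$ dominates $\sup_{t\geq 0} e^{-\nu t}\sum_{j=1}^{\eta+1}\frac{t^{j-1}}{(j-1)!}x_j$, and this bound is at most $e\max\{1,(\eta/(e\nu))^{\eta}\}\max_j |x_j|$ whenever all $x_j \geq 0$, i.e., the bound $\max_j\max\{0, x_j/\nu^{j-1}\}$ is no larger than the bound $e \max\{1,(\eta/(e\nu))^\eta\}\max_j x_j$ for $x$ with nonnegative coordinates. -/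
/-!
If `x j ≤ M ν ^ j` with `M ≥ 0`, the sum is at most `M` times a truncated exponential series of
`ν t`, which the factor `e^{-ν t}` absorbs. For the comparison, `1 / ν ^ j ≤ max 1 (1 / ν ^ η)`
for `j ≤ η`, and `1 / ν ^ η ≤ e (η / (e ν)) ^ η` because `(η / e) ^ η ≥ 1 / e`, which is
`η log η ≥ η - 1`.
-/

open Real Finset
open scoped Nat

lemma pow_le_max_one_pow {R : Type*} [Semiring R] [LinearOrder R] [IsOrderedRing R]
    {a : R} (ha : 0 ≤ a) {j n : ℕ} (hj : j ≤ n) : a ^ j ≤ max 1 (a ^ n) := by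
  rcases le_total a 1 with ha1 | ha1
  · exact (pow_le_one₀ ha ha1).trans (le_max_left _ _)
  · exact (pow_le_pow_right₀ ha1 hj).trans (le_max_right _ _)

lemma one_le_exp_one_mul_div_exp_one_pow (n : ℕ) : 1 ≤ exp 1 * (n / exp 1) ^ n := by
  rcases n.eq_zero_or_pos with rfl | hn
  · simp [one_le_exp zero_le_one]
  have hn' : (0 : ℝ) < n := by exact_mod_cast hn
  have hpow : ((n : ℝ) / exp 1) ^ n = exp (n * (log n - 1)) := by
    rw [exp_nat_mul, exp_sub, exp_log hn']
  rw [hpow, ← exp_add, one_le_exp_iff]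
  nlinarith [self_sub_one_le_mul_log hn'.le]

lemma one_div_pow_le_exp_one_mul_div_pow {ν : ℝ} (hν : 0 < ν) (n : ℕ) :
    1 / ν ^ n ≤ exp 1 * (n / (exp 1 * ν)) ^ n := by
  calc 1 / ν ^ n ≤ exp 1 * (n / exp 1) ^ n * (1 / ν ^ n) :=
        le_mul_of_one_le_left (by positivity) (one_le_exp_one_mul_div_exp_one_pow n)
    _ = exp 1 * (n / (exp 1 * ν)) ^ n := by rw [div_mul_eq_div_div, div_pow _ ν]; ring

lemma one_div_pow_le_exp_one_mul_max {ν : ℝ} (hν : 0 < ν) {j n : ℕ} (hj : j ≤ n) :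
    1 / ν ^ j ≤ exp 1 * max 1 ((n / (exp 1 * ν)) ^ n) := by
  rw [mul_max_of_nonneg _ _ (exp_pos 1).le, mul_one]
  calc 1 / ν ^ j = (1 / ν) ^ j := (one_div_pow ν j).symm
    _ ≤ max 1 ((1 / ν) ^ n) := pow_le_max_one_pow (by positivity) hj
    _ ≤ max (exp 1) (exp 1 * (n / (exp 1 * ν)) ^ n) := by
      rw [one_div_pow]
      exact max_le_max (one_le_exp zero_le_one) (one_div_pow_le_exp_one_mul_div_pow hν n)

lemma exp_neg_mul_sum_le_of_le_mul_pow {n : ℕ} {ν t M : ℝ} {x : Fin n → ℝ} (hν : 0 ≤ ν)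
    (ht : 0 ≤ t) (hM : 0 ≤ M) (hx : ∀ j, x j ≤ M * ν ^ (j : ℕ)) :
    exp (-ν * t) * ∑ j : Fin n, t ^ (j : ℕ) / (j : ℕ)! * x j ≤ M := by
  have hsum : ∑ j : Fin n, t ^ (j : ℕ) / (j : ℕ)! * x j ≤
      M * ∑ j : Fin n, (ν * t) ^ (j : ℕ) / (j : ℕ)! := by
    rw [mul_sum]
    refine sum_le_sum fun j _ => ?_
    calc t ^ (j : ℕ) / (j : ℕ)! * x j ≤ t ^ (j : ℕ) / (j : ℕ)! * (M * ν ^ (j : ℕ)) := by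
          gcongr; exact hx j
      _ = M * ((ν * t) ^ (j : ℕ) / (j : ℕ)!) := by ring
  have hexp : ∑ j : Fin n, (ν * t) ^ (j : ℕ) / (j : ℕ)! ≤ exp (ν * t) := by
    rw [Fin.sum_univ_eq_sum_range (fun j => (ν * t) ^ j / (j ! : ℝ))]
    exact sum_le_exp_of_nonneg (mul_nonneg hν ht) n
  calc exp (-ν * t) * ∑ j : Fin n, t ^ (j : ℕ) / (j : ℕ)! * x j
        ≤ exp (-ν * t) * (M * exp (ν * t)) := by
        gcongr
        exact hsum.trans (by gcongr)
    _ = M := by rw [mul_left_comm, ← exp_add]; simp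

theorem intensity_bounds_comparison (ν : ℝ) (hν : 0 < ν) (η : ℕ) (x : Fin (η + 1) → ℝ) :
    (∀ t : ℝ, 0 ≤ t →
      Real.exp (-ν * t) * ∑ j : Fin (η + 1), t ^ (j : ℕ) / (j : ℕ).factorial * x j ≤
        max 0 (Finset.univ.sup' Finset.univ_nonempty
          (fun j : Fin (η + 1) => x j / ν ^ (j : ℕ)))) ∧
    ((∀ j : Fin (η + 1), 0 ≤ x j) →
      max 0 (Finset.univ.sup' Finset.univ_nonempty
          (fun j : Fin (η + 1) => x j / ν ^ (j : ℕ))) ≤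
        Real.exp 1 * max 1 ((η / (Real.exp 1 * ν)) ^ η) *
          Finset.univ.sup' Finset.univ_nonempty x) := by
  constructor
  · intro t ht
    refine exp_neg_mul_sum_le_of_le_mul_pow hν.le ht (le_max_left _ _) fun j => ?_
    rw [← div_le_iff₀ (pow_pos hν _)]
    exact (le_sup' (fun j : Fin (η + 1) => x j / ν ^ (j : ℕ)) (mem_univ j)).trans
      (le_max_right _ _)
  · intro hx
    refine max_le (mul_nonneg (by positivity) ((hx 0).trans (le_sup' x (mem_univ 0))))
      (sup'_le _ _ fun j _ => ?_)
    calc x j / ν ^ (j : ℕ) = 1 / ν ^ (j : ℕ) * x j := by ring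
      _ ≤ _ := mul_le_mul (one_div_pow_le_exp_one_mul_max hν j.is_le) (le_sup' x (mem_univ j))
          (hx j) (by positivity)
end

section
/- Let $B$ be a standard one-dimensional Brownian motion and $T = 1$. Then the random variable $M := \sup_{0 \le s < t \le 1} \frac{|B_t - B_s|}{\sqrt{(t-s)(1 + \log(1/(t-s)))}}$ is almost surely finite, and moreover there exists $\alpha > 0$ such that $\mathbb{E}[e^{\alpha M^2}] < \infty$. -/
/-!
Lévy's dyadic chaining. Normalize the increment of `B` over each dyadic interval
`[k 2⁻ⁿ, (k + 1) 2⁻ⁿ] ⊆ [0, 1]` by `√((n + 1) 2⁻ⁿ)` and let `Z` be the supremum of these ratios.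
Each ratio is Gaussian with variance `1 / (n + 1)`, so a union bound over the `2ⁿ` intervals of
level `n` gives `P(Z > x) ≤ 4 e^{-x²/2}` for `x ≥ 2`: hence `Z` is a.s. finite and `e^{Z²/4}` is
integrable. Deterministically, for a continuous path and `2⁻ⁿ⁻¹ < t - s ≤ 2⁻ⁿ`, joining `s` and `t`
through their dyadic approximations of levels `n, n + 1, …` bounds `|B t - B s|` by `Z` times
`√((n + 1) 2⁻ⁿ) (1 + 2 ∑ₘ √((m + 1) 2⁻ᵐ))`, which is `O(Z √((t - s)(1 + log (1 / (t - s)))))`.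
So the modulus is at most a constant multiple of `Z`.
-/

open MeasureTheory ProbabilityTheory Real

/-- A standard one-dimensional Brownian motion: starts at zero, has a.s. continuous paths,
Gaussian increments of variance `t - s`, and independent increments. -/
def IsStandardBrownianMotion {Ω : Type*} [MeasurableSpace Ω] (μ : Measure Ω)
    (B : ℝ → Ω → ℝ) : Prop :=
  (∀ t : ℝ, Measurable (B t)) ∧
  (∀ᵐ ω ∂μ, B 0 ω = 0) ∧
  (∀ᵐ ω ∂μ, Continuous fun t => B t ω) ∧
  (∀ s t : ℝ, 0 ≤ s → s ≤ t →
    Measure.map (fun ω => B t ω - B s ω) μ = gaussianReal 0 (Real.toNNReal (t - s))) ∧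
  (∀ (n : ℕ) (τ : ℕ → ℝ), Monotone τ → (∀ i, 0 ≤ τ i) →
    iIndepFun
      (fun i : Fin n => fun ω => B (τ (i + 1)) ω - B (τ i) ω) μ)

/-- The normalized modulus of continuity of `B` on `[0,1]`, as an `ℝ≥0∞`-valued supremum
over all pairs `0 ≤ s < t ≤ 1`. -/
noncomputable def brownianModulus {Ω : Type*} [MeasurableSpace Ω]
    (B : ℝ → Ω → ℝ) (ω : Ω) : ENNReal :=
  ⨆ (p : ℝ × ℝ) (_ : 0 ≤ p.1 ∧ p.1 < p.2 ∧ p.2 ≤ 1),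
    ENNReal.ofReal (|B p.2 ω - B p.1 ω| /
      Real.sqrt ((p.2 - p.1) * (1 + Real.log (1 / (p.2 - p.1)))))

open Filter Topology
open scoped ENNReal NNReal

noncomputable def dyadicScale (n : ℕ) : ℝ := √((n + 1) / 2 ^ n)

lemma dyadicScale_pos (n : ℕ) : 0 < dyadicScale n := by
  unfold dyadicScale; positivity

lemma dyadicScale_sq (n : ℕ) : dyadicScale n ^ 2 = (n + 1) / 2 ^ n :=
  Real.sq_sqrt (by positivity)

lemma dyadicScale_add_le_mul (m j : ℕ) :
    dyadicScale (m + j) ≤ dyadicScale m * dyadicScale j := by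
  rw [dyadicScale, dyadicScale, dyadicScale, ← Real.sqrt_mul (by positivity)]
  refine Real.sqrt_le_sqrt ?_
  rw [div_mul_div_comm, ← pow_add]
  gcongr
  push_cast
  nlinarith [(m.cast_nonneg : (0 : ℝ) ≤ m), (j.cast_nonneg : (0 : ℝ) ≤ j)]

lemma summable_dyadicScale : Summable dyadicScale := by
  have hr : ‖(√2)⁻¹‖ < 1 := by
    rw [norm_inv, Real.norm_of_nonneg (by positivity), inv_lt_one₀ (by positivity)]
    exact Real.lt_sqrt_of_sq_lt (by norm_num)
  have hsum : Summable fun n : ℕ => ((n : ℝ) + 1) * (√2)⁻¹ ^ n := by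
    simpa [add_mul] using
      (summable_pow_mul_geometric_of_norm_lt_one 1 hr).add (summable_geometric_of_norm_lt_one hr)
  refine hsum.of_nonneg_of_le (fun n => (dyadicScale_pos n).le) fun n => ?_
  refine Real.sqrt_le_iff.mpr ⟨by positivity, ?_⟩
  rw [mul_pow, ← pow_mul, mul_comm n 2, pow_mul, inv_pow, Real.sq_sqrt zero_le_two, inv_pow,
    ← div_eq_mul_inv]
  gcongr
  nlinarith [(n.cast_nonneg : (0 : ℝ) ≤ n)]

lemma dyadicScale_le_sqrt_mul_log {δ : ℝ} {n : ℕ} (hδ : 0 < δ) (hn : 2 ^ n ≤ 1 / δ)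
    (hn' : 1 / δ < 2 ^ (n + 1)) :
    dyadicScale n ≤ 2 * √(δ * (1 + log (1 / δ))) := by
  have hL : n * log 2 ≤ log (1 / δ) := by
    rw [← Real.log_pow]; exact Real.log_le_log (by positivity) hn
  have hlog2 : (1 : ℝ) / 2 < log 2 := by linarith [Real.log_two_gt_d9]
  have hn1 : (n : ℝ) + 1 ≤ 2 * (1 + log (1 / δ)) := by nlinarith [(n.cast_nonneg : (0 : ℝ) ≤ n)]
  have hδn : 1 / 2 ^ n ≤ 2 * δ := by
    rw [div_lt_iff₀ hδ, pow_succ] at hn'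
    rw [div_le_iff₀ (by positivity)]; nlinarith
  calc dyadicScale n = √(((n : ℝ) + 1) * (1 / 2 ^ n)) := by rw [dyadicScale, mul_one_div]
    _ ≤ √(2 ^ 2 * (δ * (1 + log (1 / δ)))) := by
      refine Real.sqrt_le_sqrt ?_
      calc ((n : ℝ) + 1) * (1 / 2 ^ n) ≤ 2 * (1 + log (1 / δ)) * (2 * δ) :=
        mul_le_mul hn1 hδn (by positivity) (by linarith)
        _ = 2 ^ 2 * (δ * (1 + log (1 / δ))) := by ring
    _ = 2 * √(δ * (1 + log (1 / δ))) := by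
      rw [Real.sqrt_mul (by positivity), Real.sqrt_sq zero_le_two]

noncomputable def dyadicFloor (u : ℝ) (n : ℕ) : ℝ := ⌊u * 2 ^ n⌋₊ / 2 ^ n

lemma tendsto_dyadicFloor {u : ℝ} (hu : 0 ≤ u) : Tendsto (dyadicFloor u) atTop (𝓝 u) := by
  have hlow : ∀ n : ℕ, u - (1 / 2) ^ n ≤ dyadicFloor u n := fun n => by
    have := Nat.lt_floor_add_one (u * 2 ^ n)
    rw [dyadicFloor, le_div_iff₀ (by positivity), sub_mul, one_div_pow,
      one_div_mul_cancel (by positivity)]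
    linarith
  have hup : ∀ n : ℕ, dyadicFloor u n ≤ u := fun n => by
    rw [dyadicFloor, div_le_iff₀ (by positivity)]
    exact Nat.floor_le (by positivity)
  have hlim : Tendsto (fun n : ℕ => u - (1 / 2) ^ n) atTop (𝓝 u) := by
    simpa using tendsto_const_nhds.sub
      (tendsto_pow_atTop_nhds_zero_of_lt_one (by norm_num : (0 : ℝ) ≤ 1 / 2) (by norm_num))
  exact tendsto_of_tendsto_of_tendsto_of_le_of_le hlim tendsto_const_nhds hlow hup

lemma tsum_dyadicScale_nonneg : 0 ≤ ∑' n, dyadicScale n :=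
  tsum_nonneg fun n => (dyadicScale_pos n).le

noncomputable def levyConstant : ℝ := 2 * (1 + 2 * ∑' n, dyadicScale n)

lemma levyConstant_pos : 0 < levyConstant := by
  unfold levyConstant; linarith [tsum_dyadicScale_nonneg]

noncomputable def dyadicModulus (f : ℝ → ℝ) : ℝ≥0∞ :=
  ⨆ (n : ℕ) (k : Fin (2 ^ n)),
    ENNReal.ofReal (|f ((k + 1) / 2 ^ n) - f (k / 2 ^ n)| / dyadicScale n)

section Chaining

variable {f : ℝ → ℝ} {x : ℝ}
  (hf : ∀ n k : ℕ, k < 2 ^ n → |f ((k + 1) / 2 ^ n) - f (k / 2 ^ n)| ≤ x * dyadicScale n)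
include hf

lemma nonneg_of_abs_dyadic_sub_le : 0 ≤ x := by
  nlinarith [(abs_nonneg _).trans (hf 0 0 one_pos), dyadicScale_pos 0]

lemma abs_sub_dyadic_le_of_le_succ {n j k : ℕ} (hkj : k ≤ j) (hjk : j ≤ k + 1) (hj : j ≤ 2 ^ n) :
    |f (j / 2 ^ n) - f (k / 2 ^ n)| ≤ x * dyadicScale n := by
  obtain rfl | rfl : j = k ∨ j = k + 1 := by omega
  · simpa using mul_nonneg (nonneg_of_abs_dyadic_sub_le hf) (dyadicScale_pos n).le
  · exact_mod_cast hf n k (by omega)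

lemma abs_dyadicFloor_succ_sub_le {u : ℝ} (hu0 : 0 ≤ u) (hu1 : u ≤ 1) (i : ℕ) :
    |f (dyadicFloor u (i + 1)) - f (dyadicFloor u i)| ≤ x * dyadicScale (i + 1) := by
  have hlt := Nat.lt_floor_add_one (u * 2 ^ i)
  have hle := Nat.floor_le (by positivity : 0 ≤ u * 2 ^ i)
  have hcoarse : dyadicFloor u i = (2 * ⌊u * 2 ^ i⌋₊ : ℕ) / 2 ^ (i + 1) := by
    rw [dyadicFloor, pow_succ]; push_cast; field_simp
  rw [hcoarse, dyadicFloor]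
  refine abs_sub_dyadic_le_of_le_succ hf (Nat.le_floor ?_) (Nat.le_of_lt_succ ?_)
    (Nat.floor_le_of_le ?_)
  · push_cast; rw [pow_succ]; linarith
  · rw [Nat.floor_lt (by positivity)]; push_cast; rw [pow_succ]; linarith
  · push_cast; nlinarith [pow_pos (two_pos : (0 : ℝ) < 2) (i + 1)]

lemma abs_dyadicFloor_add_sub_le {u : ℝ} (hu0 : 0 ≤ u) (hu1 : u ≤ 1) (m i : ℕ) :
    |f (dyadicFloor u (m + i)) - f (dyadicFloor u m)| ≤
      x * ∑ j ∈ Finset.range i, dyadicScale (m + 1 + j) := by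
  induction i with
  | zero => simp
  | succ i ih =>
    rw [Finset.sum_range_succ, mul_add, ← add_assoc, add_right_comm m 1 i]
    calc |f (dyadicFloor u (m + i + 1)) - f (dyadicFloor u m)|
        ≤ |f (dyadicFloor u (m + i + 1)) - f (dyadicFloor u (m + i))|
          + |f (dyadicFloor u (m + i)) - f (dyadicFloor u m)| := abs_sub_le _ _ _
      _ ≤ _ := add_le_add (abs_dyadicFloor_succ_sub_le hf hu0 hu1 (m + i)) ih
      _ = _ := add_comm _ _

lemma abs_sub_dyadicFloor_le (hcont : Continuous f) {u : ℝ} (hu0 : 0 ≤ u) (hu1 : u ≤ 1) (m : ℕ) :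
    |f u - f (dyadicFloor u m)| ≤ x * (dyadicScale m * ∑' j, dyadicScale j) := by
  have hpartial : ∀ i, ∑ j ∈ Finset.range i, dyadicScale (m + 1 + j) ≤
      dyadicScale m * ∑' j, dyadicScale j := fun i => calc
    ∑ j ∈ Finset.range i, dyadicScale (m + 1 + j)
        ≤ ∑ j ∈ Finset.range i, dyadicScale m * dyadicScale (j + 1) :=
      Finset.sum_le_sum fun j _ => by rw [add_assoc, add_comm 1 j]; exact dyadicScale_add_le_mul _ _
    _ ≤ dyadicScale m * ∑ j ∈ Finset.range (i + 1), dyadicScale j := by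
      rw [← Finset.mul_sum, Finset.sum_range_succ' _ i]
      exact mul_le_mul_of_nonneg_left (le_add_of_nonneg_right (dyadicScale_pos 0).le)
        (dyadicScale_pos m).le
    _ ≤ dyadicScale m * ∑' j, dyadicScale j := mul_le_mul_of_nonneg_left
      (summable_dyadicScale.sum_le_tsum _ fun j _ => (dyadicScale_pos j).le) (dyadicScale_pos m).le
  have hlim : Tendsto (fun i => |f (dyadicFloor u (m + i)) - f (dyadicFloor u m)|) atTop
      (𝓝 |f u - f (dyadicFloor u m)|) :=
    have hpt : Tendsto (fun i => dyadicFloor u (m + i)) atTop (𝓝 u) :=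
      (tendsto_dyadicFloor hu0).comp (tendsto_add_atTop_nat m |>.congr fun i => add_comm i m)
    ((hcont.tendsto u).comp hpt |>.sub_const _).abs
  exact le_of_tendsto' hlim fun i => (abs_dyadicFloor_add_sub_le hf hu0 hu1 m i).trans
    (mul_le_mul_of_nonneg_left (hpartial i) (nonneg_of_abs_dyadic_sub_le hf))

lemma abs_sub_le_of_sub_le_one_div_two_pow (hcont : Continuous f) {s t : ℝ} {n : ℕ} (hs : 0 ≤ s)
    (hst : s ≤ t) (ht : t ≤ 1) (hn : t - s ≤ 1 / 2 ^ n) :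
    |f t - f s| ≤ x * dyadicScale n * (1 + 2 * ∑' j, dyadicScale j) := by
  have hmid : |f (dyadicFloor t n) - f (dyadicFloor s n)| ≤ x * dyadicScale n := by
    refine abs_sub_dyadic_le_of_le_succ hf (Nat.floor_le_floor (by gcongr)) ?_
      (Nat.floor_le_of_le ?_)
    · rw [← Nat.floor_add_one (by positivity)]
      refine Nat.floor_le_floor ?_
      rw [le_div_iff₀ (by positivity)] at hn
      linarith
    · push_cast; nlinarith [pow_pos (two_pos : (0 : ℝ) < 2) n]
  have ht' := abs_sub_dyadicFloor_le hf hcont (hs.trans hst) ht n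
  have hs' := abs_sub_dyadicFloor_le hf hcont hs (hst.trans ht) n
  rw [abs_sub_comm] at hs'
  calc |f t - f s|
      ≤ |f t - f (dyadicFloor t n)| + |f (dyadicFloor t n) - f (dyadicFloor s n)|
        + |f (dyadicFloor s n) - f s| :=
      (abs_sub_le _ (f (dyadicFloor s n)) _).trans (add_le_add_left (abs_sub_le _ _ _) _)
    _ ≤ _ := by linarith

lemma abs_sub_le_levyConstant_mul (hcont : Continuous f) {s t : ℝ} (hs : 0 ≤ s) (hst : s < t)
    (ht : t ≤ 1) : |f t - f s| ≤ levyConstant * x * √((t - s) * (1 + log (1 / (t - s)))) := by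
  have hδ : 0 < t - s := sub_pos.mpr hst
  obtain ⟨n, hn, hn'⟩ := exists_nat_pow_near (one_le_one_div hδ (by linarith)) one_lt_two
  have hx := nonneg_of_abs_dyadic_sub_le hf
  calc |f t - f s| ≤ x * dyadicScale n * (1 + 2 * ∑' j, dyadicScale j) :=
        abs_sub_le_of_sub_le_one_div_two_pow hf hcont hs hst.le ht
          ((le_one_div (by positivity) hδ).mp hn)
    _ ≤ x * (2 * √((t - s) * (1 + log (1 / (t - s))))) * (1 + 2 * ∑' j, dyadicScale j) := by
        gcongr
        · linarith [tsum_dyadicScale_nonneg]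
        · exact dyadicScale_le_sqrt_mul_log hδ hn hn'
    _ = levyConstant * x * √((t - s) * (1 + log (1 / (t - s)))) := by rw [levyConstant]; ring

end Chaining

lemma abs_sub_le_toReal_dyadicModulus {f : ℝ → ℝ} (h : dyadicModulus f ≠ ⊤) (n k : ℕ)
    (hk : k < 2 ^ n) :
    |f ((k + 1) / 2 ^ n) - f (k / 2 ^ n)| ≤ (dyadicModulus f).toReal * dyadicScale n := by
  have hterm : ENNReal.ofReal (|f ((k + 1) / 2 ^ n) - f (k / 2 ^ n)| / dyadicScale n) ≤
      ENNReal.ofReal (dyadicModulus f).toReal := by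
    rw [ENNReal.ofReal_toReal h]
    exact le_iSup₂_of_le (f := fun (n : ℕ) (k : Fin (2 ^ n)) => ENNReal.ofReal
      (|f ((k + 1) / 2 ^ n) - f (k / 2 ^ n)| / dyadicScale n)) n ⟨k, hk⟩ le_rfl
  rwa [ENNReal.ofReal_le_ofReal_iff ENNReal.toReal_nonneg, div_le_iff₀ (dyadicScale_pos n)]
    at hterm

lemma brownianModulus_le_mul_dyadicModulus {Ω : Type*} [MeasurableSpace Ω] {B : ℝ → Ω → ℝ}
    {ω : Ω} (hcont : Continuous fun t => B t ω) :
    brownianModulus B ω ≤ ENNReal.ofReal levyConstant * dyadicModulus (B · ω) := by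
  rcases eq_or_ne (dyadicModulus (B · ω)) ⊤ with htop | htop
  · rw [htop, ENNReal.mul_top (ENNReal.ofReal_pos.mpr levyConstant_pos).ne']
    exact le_top
  refine iSup₂_le fun p ⟨hs, hst, ht⟩ => ?_
  have hδ : 0 < p.2 - p.1 := sub_pos.mpr hst
  have hlog : 0 ≤ log (1 / (p.2 - p.1)) :=
    Real.log_nonneg (one_le_one_div hδ (by linarith))
  rw [← ENNReal.ofReal_toReal htop, ← ENNReal.ofReal_mul levyConstant_pos.le]
  refine ENNReal.ofReal_le_ofReal ((div_le_iff₀ (by positivity)).mpr ?_)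
  exact abs_sub_le_levyConstant_mul (abs_sub_le_toReal_dyadicModulus htop) hcont hs hst ht

lemma toReal_brownianModulus_le {Ω : Type*} [MeasurableSpace Ω] {B : ℝ → Ω → ℝ} {ω : Ω}
    (hcont : Continuous fun t => B t ω) (hfin : dyadicModulus (B · ω) < ⊤) :
    (brownianModulus B ω).toReal ≤ levyConstant * (dyadicModulus (B · ω)).toReal := by
  simpa [ENNReal.toReal_mul, levyConstant_pos.le] using
    ENNReal.toReal_mono (ENNReal.mul_lt_top ENNReal.ofReal_lt_top hfin).ne
      (brownianModulus_le_mul_dyadicModulus hcont)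

lemma hasSubgaussianMGF_id_gaussianReal (v : ℝ≥0) : HasSubgaussianMGF id v (gaussianReal 0 v) :=
  ⟨integrable_exp_mul_gaussianReal, fun t => by simp [mgf_id_gaussianReal, mul_comm]⟩

lemma ProbabilityTheory.HasSubgaussianMGF.measure_le_abs_le {Ω : Type*} [MeasurableSpace Ω]
    {μ : Measure Ω} [IsFiniteMeasure μ] {X : Ω → ℝ} {c : ℝ≥0} (h : HasSubgaussianMGF X c μ) {ε : ℝ}
    (hε : 0 ≤ ε) :
    μ {ω | ε ≤ |X ω|} ≤ ENNReal.ofReal (2 * exp (-ε ^ 2 / (2 * c))) := by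
  have hside : ∀ Y : Ω → ℝ, HasSubgaussianMGF Y c μ →
      μ {ω | ε ≤ Y ω} ≤ ENNReal.ofReal (exp (-ε ^ 2 / (2 * c))) := fun Y hY => by
    rw [← ofReal_measureReal]
    exact ENNReal.ofReal_le_ofReal (hY.measure_ge_le hε)
  calc μ {ω | ε ≤ |X ω|} ≤ μ ({ω | ε ≤ X ω} ∪ {ω | ε ≤ (-X) ω}) :=
        measure_mono fun ω (hω : ε ≤ |X ω|) =>
          show ε ≤ X ω ∨ ε ≤ -X ω from le_abs.mp hω
    _ ≤ μ {ω | ε ≤ X ω} + μ {ω | ε ≤ (-X) ω} := measure_union_le _ _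
    _ ≤ ENNReal.ofReal (exp (-ε ^ 2 / (2 * c))) + ENNReal.ofReal (exp (-ε ^ 2 / (2 * c))) :=
        add_le_add (hside X h) (hside (-X) h.neg)
    _ = ENNReal.ofReal (2 * exp (-ε ^ 2 / (2 * c))) := by
        rw [← ENNReal.ofReal_add (by positivity) (by positivity), ← two_mul]

lemma two_mul_exp_neg_sq_div_two_le_inv_two {x : ℝ} (hx : 2 ≤ x) :
    2 * exp (-x ^ 2 / 2) ≤ 2⁻¹ := by
  have he : exp (-x ^ 2 / 2) ≤ exp (-2) := exp_le_exp.mpr (by nlinarith)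
  have h4 : (4 : ℝ) ≤ exp 2 := by
    rw [show (2 : ℝ) = 1 + 1 by norm_num, exp_add]; nlinarith [exp_one_gt_d9]
  have : exp (-2) ≤ 4⁻¹ := by
    rw [exp_neg]; exact inv_anti₀ (by norm_num) h4
  linarith

lemma measurable_dyadicModulus {Ω : Type*} [MeasurableSpace Ω] {B : ℝ → Ω → ℝ}
    (hmeas : ∀ t, Measurable (B t)) : Measurable fun ω => dyadicModulus (B · ω) :=
  .iSup fun _ => .iSup fun _ => (((hmeas _).sub (hmeas _)).abs.div_const _).ennreal_ofReal

section GaussianIncrements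

variable {Ω : Type*} [MeasurableSpace Ω] {μ : Measure Ω} [IsFiniteMeasure μ] {B : ℝ → Ω → ℝ}
  (hmeas : ∀ t, Measurable (B t))
  (hinc : ∀ s t : ℝ, 0 ≤ s → s ≤ t →
    Measure.map (fun ω => B t ω - B s ω) μ = gaussianReal 0 (Real.toNNReal (t - s)))
include hmeas hinc

lemma measure_lt_dyadic_increment_le {x : ℝ} (hx : 0 ≤ x) (n k : ℕ) :
    μ {ω | ENNReal.ofReal x <
      ENNReal.ofReal (|B ((k + 1) / 2 ^ n) ω - B (k / 2 ^ n) ω| / dyadicScale n)}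
      ≤ ENNReal.ofReal (2 * exp (-x ^ 2 / 2) ^ (n + 1)) := by
  have hlen : ((k : ℝ) + 1) / 2 ^ n - k / 2 ^ n = 1 / 2 ^ n := by ring
  have hsg : HasSubgaussianMGF (fun ω => B ((k + 1) / 2 ^ n) ω - B (k / 2 ^ n) ω)
      (Real.toNNReal (1 / 2 ^ n)) μ := by
    refine (HasSubgaussianMGF.id_map_iff (by fun_prop)).mp ?_
    rw [hinc _ _ (by positivity) (by rw [← sub_nonneg, hlen]; positivity), hlen]
    exact hasSubgaussianMGF_id_gaussianReal _
  refine (measure_mono fun ω hω => ?_).trans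
    ((hsg.measure_le_abs_le (mul_nonneg hx (dyadicScale_pos n).le)).trans_eq ?_)
  · have := ((ENNReal.ofReal_lt_ofReal_iff'.mp hω).1)
    rw [lt_div_iff₀ (dyadicScale_pos n)] at this
    exact this.le
  · rw [mul_pow, dyadicScale_sq, Real.coe_toNNReal _ (by positivity), ← Real.exp_nat_mul]
    congr 3
    field_simp
    push_cast
    ring

lemma measure_lt_dyadicModulus_le {x : ℝ} (hx : 2 ≤ x) :
    μ {ω | ENNReal.ofReal x < dyadicModulus (B · ω)} ≤ ENNReal.ofReal (4 * exp (-x ^ 2 / 2)) := by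
  set r := 2 * exp (-x ^ 2 / 2) with hr
  have hr_half : ENNReal.ofReal r ≤ 2⁻¹ := by
    rw [← ENNReal.ofReal_ofNat 2, ← ENNReal.ofReal_inv_of_pos two_pos]
    exact ENNReal.ofReal_le_ofReal (two_mul_exp_neg_sq_div_two_le_inv_two hx)
  have hterm : ∀ n : ℕ, ∑ _k : Fin (2 ^ n), ENNReal.ofReal (2 * exp (-x ^ 2 / 2) ^ (n + 1))
      = ENNReal.ofReal r * ENNReal.ofReal r ^ n := fun n => by
    rw [Finset.sum_const, Finset.card_univ, Fintype.card_fin, nsmul_eq_mul,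
      ← ENNReal.ofReal_pow (by positivity), ← ENNReal.ofReal_mul (by positivity),
      ← ENNReal.ofReal_natCast, ← ENNReal.ofReal_mul (by positivity), hr]
    congr 1
    push_cast
    ring
  calc μ {ω | ENNReal.ofReal x < dyadicModulus (B · ω)}
      ≤ ∑' n : ℕ, ∑ k : Fin (2 ^ n), μ {ω | ENNReal.ofReal x <
          ENNReal.ofReal (|B ((k + 1) / 2 ^ n) ω - B (k / 2 ^ n) ω| / dyadicScale n)} := by
        refine (measure_mono fun ω hω => ?_).trans ((measure_iUnion_le _).trans
          (ENNReal.tsum_le_tsum fun n => measure_iUnion_fintype_le _ _))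
        simpa [dyadicModulus, lt_iSup_iff] using hω
    _ ≤ ∑' n : ℕ, ENNReal.ofReal r * ENNReal.ofReal r ^ n := ENNReal.tsum_le_tsum fun n =>
        (Finset.sum_le_sum fun (k : Fin (2 ^ n)) _ =>
          measure_lt_dyadic_increment_le hmeas hinc (by linarith) n k).trans_eq (hterm n)
    _ ≤ ∑' n : ℕ, ENNReal.ofReal r * 2⁻¹ ^ n := by gcongr
    _ = ENNReal.ofReal (4 * exp (-x ^ 2 / 2)) := by
        rw [ENNReal.tsum_mul_left, ENNReal.tsum_geometric_two, ← ENNReal.ofReal_ofNat 2,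
          ← ENNReal.ofReal_mul (by positivity), hr]
        ring_nf

end GaussianIncrements

section GaussianTail

variable {Ω : Type*} [MeasurableSpace Ω] {μ : Measure Ω} {X : Ω → ℝ≥0∞} {C x₀ : ℝ}
  (htail : ∀ x, x₀ ≤ x → μ {ω | ENNReal.ofReal x < X ω} ≤ ENNReal.ofReal (C * exp (-x ^ 2 / 2)))
include htail

lemma ae_lt_top_of_measure_lt_le : ∀ᵐ ω ∂μ, X ω < ⊤ := by
  have hlim : Tendsto (fun x : ℝ => ENNReal.ofReal (C * exp (-x ^ 2 / 2))) atTop (𝓝 0) := by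
    have hsq : Tendsto (fun x : ℝ => x ^ 2 / 2) atTop atTop :=
      (tendsto_pow_atTop two_ne_zero).atTop_div_const two_pos
    simpa [neg_div] using
      ENNReal.tendsto_ofReal ((Real.tendsto_exp_neg_atTop_nhds_zero.comp hsq).const_mul C)
  simp only [ae_iff, not_lt, top_le_iff]
  refine le_antisymm (ge_of_tendsto hlim ?_) bot_le
  filter_upwards [eventually_ge_atTop x₀] with x hx
  exact (measure_mono fun ω (hω : X ω = ⊤) => by simp [hω]).trans (htail x hx)

lemma measure_lt_exp_sq_div_four_le {t : ℝ} (ht1 : 1 ≤ t) (ht : x₀ ≤ 2 * √(log t)) :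
    μ {ω | t < exp ((X ω).toReal ^ 2 / 4)} ≤ ENNReal.ofReal (C * t ^ (-2 : ℝ)) := by
  have hlog : 0 ≤ log t := Real.log_nonneg ht1
  refine (measure_mono fun ω (hω : t < exp ((X ω).toReal ^ 2 / 4)) => ?_).trans
    ((htail _ ht).trans_eq ?_)
  · rw [← Real.log_lt_iff_lt_exp (by linarith)] at hω
    have hlt : 2 * √(log t) < (X ω).toReal := by
      refine lt_of_pow_lt_pow_left₀ 2 ENNReal.toReal_nonneg ?_
      rw [mul_pow, Real.sq_sqrt hlog]
      linarith
    exact ((ENNReal.ofReal_lt_ofReal_iff ((by positivity : 0 ≤ 2 * √(log t)).trans_lt hlt)).mpr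
      hlt).trans_le ENNReal.ofReal_toReal_le
  · rw [Real.rpow_def_of_pos (by linarith), mul_pow, Real.sq_sqrt hlog]
    congr 3
    ring

lemma lintegral_exp_sq_div_four_lt_top [IsFiniteMeasure μ] (hX : Measurable X) :
    ∫⁻ ω, ENNReal.ofReal (exp ((X ω).toReal ^ 2 / 4)) ∂μ < ⊤ := by
  set T := max 1 (exp (x₀ ^ 2 / 4))
  have hT1 : 1 ≤ T := le_max_left _ _
  have hbound : ∀ t ∈ Set.Ioi T, μ {ω | t < exp ((X ω).toReal ^ 2 / 4)} ≤
      ENNReal.ofReal (C * t ^ (-2 : ℝ)) := fun t (ht : T < t) => by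
    refine measure_lt_exp_sq_div_four_le htail (hT1.trans ht.le) ?_
    have hlog : (x₀ / 2) ^ 2 ≤ log t := by
      rw [Real.le_log_iff_exp_le (by linarith), div_pow, show (2 : ℝ) ^ 2 = 4 by norm_num]
      exact (le_max_right _ _).trans ht.le
    have := Real.abs_le_sqrt hlog
    rw [abs_div, abs_two] at this
    linarith [le_abs_self x₀]
  rw [lintegral_eq_lintegral_meas_lt μ (ae_of_all _ fun _ => (exp_pos _).le)
    (by fun_prop), ← Set.Ioc_union_Ioi_eq_Ioi (zero_le_one.trans hT1)]
  refine (lintegral_union_le _ _ _).trans_lt (ENNReal.add_lt_top.mpr ⟨?_, ?_⟩)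
  · calc ∫⁻ t in Set.Ioc 0 T, μ {ω | t < exp ((X ω).toReal ^ 2 / 4)}
        ≤ ∫⁻ t in Set.Ioc 0 T, μ Set.univ :=
          lintegral_mono fun t => measure_mono (Set.subset_univ _)
      _ < ⊤ := by
        rw [setLIntegral_const, Real.volume_Ioc]
        exact ENNReal.mul_lt_top (measure_lt_top _ _) ENNReal.ofReal_lt_top
  · calc ∫⁻ t in Set.Ioi T, μ {ω | t < exp ((X ω).toReal ^ 2 / 4)}
        ≤ ∫⁻ t in Set.Ioi T, ENNReal.ofReal (C * t ^ (-2 : ℝ)) :=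
          setLIntegral_mono (by fun_prop) hbound
      _ < ⊤ := ((integrableOn_Ioi_rpow_of_lt (by norm_num) (zero_lt_one.trans_le hT1)).const_mul
          C).lintegral_lt_top

end GaussianTail

theorem brownian_modulus_finite_and_exp_integrable {Ω : Type*} [MeasurableSpace Ω]
    (μ : Measure Ω) [IsProbabilityMeasure μ] (B : ℝ → Ω → ℝ)
    (hB : IsStandardBrownianMotion μ B) :
    (∀ᵐ ω ∂μ, brownianModulus B ω < ⊤) ∧
    ∃ α : ℝ, 0 < α ∧
      ∫⁻ ω, ENNReal.ofReal (Real.exp (α * ((brownianModulus B ω).toReal) ^ 2)) ∂μ < ⊤ := by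
  obtain ⟨hmeas, -, hcont, hinc, -⟩ := hB
  have htail : ∀ x, 2 ≤ x → μ {ω | ENNReal.ofReal x < dyadicModulus (B · ω)} ≤
      ENNReal.ofReal (4 * exp (-x ^ 2 / 2)) := fun x hx =>
    measure_lt_dyadicModulus_le hmeas hinc hx
  have hfin := ae_lt_top_of_measure_lt_le htail
  have hK := levyConstant_pos
  refine ⟨?_, (4 * levyConstant ^ 2)⁻¹, by positivity, ?_⟩
  · filter_upwards [hfin, hcont] with ω hD hω
    exact (brownianModulus_le_mul_dyadicModulus hω).trans_lt
      (ENNReal.mul_lt_top ENNReal.ofReal_lt_top hD)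
  refine (lintegral_mono_ae ?_).trans_lt
    (lintegral_exp_sq_div_four_lt_top htail (measurable_dyadicModulus hmeas))
  filter_upwards [hfin, hcont] with ω hD hω
  have hMD := toReal_brownianModulus_le hω hD
  refine ENNReal.ofReal_le_ofReal (exp_le_exp.mpr ?_)
  calc (4 * levyConstant ^ 2)⁻¹ * (brownianModulus B ω).toReal ^ 2
      ≤ (4 * levyConstant ^ 2)⁻¹ * (levyConstant * (dyadicModulus (B · ω)).toReal) ^ 2 := by
        gcongr
    _ = (dyadicModulus (B · ω)).toReal ^ 2 / 4 := by field_simp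
end
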